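/- arXiv:2510.25143 — 2 statements merged into one kernel-verified Lean document; each statement's English description precedes it below -/
import Mathlib

section
/- Let b = (u₁, v₁) and c = (u₂, v₂) be vectors in ℝ² and let δ = (δu, δv) ∈ ℝ² be a perturbation satisfying (|u₁| + |v₁|) · max(|δu|, |δv|) < |u₁v₂ − u₂v₁|. Then det(b, c + δ) = u₁(v₂ + δv) − (u₂ + δu)v₁ is nonzero and has the same sign as det(b, c) = u₁v₂ − u₂v₁. -/
lemma sign_stable (a b : ℝ) (h : |a - b| < |b|) :
    a ≠ 0 ∧ Real.sign a = Real.sign b := by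
  rcases lt_trichotomy b 0 with hb | hb | hb
  · have ha : a < 0 := by
      have := abs_sub_lt_iff.mp h
      rw [abs_of_neg hb] at this
      linarith [this.2]
    exact ⟨ne_of_lt ha, by rw [Real.sign_of_neg ha, Real.sign_of_neg hb]⟩
  · simp [hb] at h; linarith [abs_nonneg a]
  · have ha : 0 < a := by
      have := abs_sub_lt_iff.mp h
      rw [abs_of_pos hb] at this
      linarith [this.1]
    exact ⟨ne_of_gt ha, by rw [Real.sign_of_pos ha, Real.sign_of_pos hb]⟩

/-- If `(|u₁| + |v₁|) · max(|δu|, |δv|) < |u₁v₂ − u₂v₁|`, then the perturbed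
determinant `u₁(v₂ + δv) − (u₂ + δu)v₁` is nonzero and has the same sign as
`u₁v₂ − u₂v₁`. -/
theorem stmt13 (u₁ v₁ u₂ v₂ δu δv : ℝ)
    (h : (|u₁| + |v₁|) * max |δu| |δv| < |u₁ * v₂ - u₂ * v₁|) :
    u₁ * (v₂ + δv) - (u₂ + δu) * v₁ ≠ 0 ∧
      Real.sign (u₁ * (v₂ + δv) - (u₂ + δu) * v₁) =
        Real.sign (u₁ * v₂ - u₂ * v₁) := by
  apply sign_stable
  have key : |u₁ * (v₂ + δv) - (u₂ + δu) * v₁ - (u₁ * v₂ - u₂ * v₁)|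
      ≤ (|u₁| + |v₁|) * max |δu| |δv| := by
    have : u₁ * (v₂ + δv) - (u₂ + δu) * v₁ - (u₁ * v₂ - u₂ * v₁)
        = u₁ * δv - δu * v₁ := by ring
    rw [this]
    calc |u₁ * δv - δu * v₁| ≤ |u₁ * δv| + |δu * v₁| := abs_sub _ _
      _ = |u₁| * |δv| + |δu| * |v₁| := by rw [abs_mul, abs_mul]
      _ ≤ |u₁| * max |δu| |δv| + max |δu| |δv| * |v₁| := by
          gcongr
          exacts [le_max_right _ _, le_max_left _ _]
      _ = (|u₁| + |v₁|) * max |δu| |δv| := by ring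
  linarith
end

section
/- Let a = (u₀, v₀), b = (u₁, v₁), c ∈ ℝ² and set M := det(a,b) + det(b,c) + det(c,a). Suppose M ≠ 0 and let δ = (δu, δv) ∈ ℝ² satisfy (|u₁ − u₀| + |v₀ − v₁|) · max(|δu|, |δv|) < |M|. Then M' := det(a,b) + det(b, c + δ) + det(c + δ, a) is nonzero and has the same sign as M. -/
/-- The 2D scalar cross product: `det(x,y) = x₁y₂ − x₂y₁`. -/
def det2 (x y : ℝ × ℝ) : ℝ := x.1 * y.2 - x.2 * y.1

lemma sign_aux (x y : ℝ) (h : |x - y| < |y|) : x ≠ 0 ∧ Real.sign x = Real.sign y := by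
  rcases lt_trichotomy y 0 with hy | hy | hy
  · have hx : x < 0 := by
      rw [abs_of_neg hy] at h
      cases abs_lt.1 h; linarith
    exact ⟨ne_of_lt hx, by rw [Real.sign_of_neg hx, Real.sign_of_neg hy]⟩
  · simp [hy] at h; linarith [abs_nonneg x]
  · have hx : 0 < x := by
      rw [abs_of_pos hy] at h
      cases abs_lt.1 h; linarith
    exact ⟨ne_of_gt hx, by rw [Real.sign_of_pos hx, Real.sign_of_pos hy]⟩

/-- Let `a = (u₀,v₀)`, `b = (u₁,v₁)`, `c ∈ ℝ²` and
`M := det(a,b) + det(b,c) + det(c,a) ≠ 0`. If the perturbation `δ = (δu, δv)`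
satisfies `(|u₁ − u₀| + |v₀ − v₁|) · max(|δu|, |δv|) < |M|`, then
`M' := det(a,b) + det(b, c + δ) + det(c + δ, a)` is nonzero and has the same
sign as `M`. -/
theorem stmt14 (u₀ v₀ u₁ v₁ : ℝ) (c : ℝ × ℝ) (δu δv : ℝ)
    (hM : det2 (u₀, v₀) (u₁, v₁) + det2 (u₁, v₁) c + det2 c (u₀, v₀) ≠ 0)
    (h : (|u₁ - u₀| + |v₀ - v₁|) * max |δu| |δv| <
      |det2 (u₀, v₀) (u₁, v₁) + det2 (u₁, v₁) c + det2 c (u₀, v₀)|) :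
    det2 (u₀, v₀) (u₁, v₁) + det2 (u₁, v₁) (c + (δu, δv)) +
        det2 (c + (δu, δv)) (u₀, v₀) ≠ 0 ∧
      Real.sign (det2 (u₀, v₀) (u₁, v₁) + det2 (u₁, v₁) (c + (δu, δv)) +
          det2 (c + (δu, δv)) (u₀, v₀)) =
        Real.sign (det2 (u₀, v₀) (u₁, v₁) + det2 (u₁, v₁) c + det2 c (u₀, v₀)) := by
  set M := det2 (u₀, v₀) (u₁, v₁) + det2 (u₁, v₁) c + det2 c (u₀, v₀) with hMdef
  set M' := det2 (u₀, v₀) (u₁, v₁) + det2 (u₁, v₁) (c + (δu, δv)) +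
      det2 (c + (δu, δv)) (u₀, v₀) with hM'def
  apply sign_aux
  have hdiff : M' - M = δv * (u₁ - u₀) + δu * (v₀ - v₁) := by
    simp only [hMdef, hM'def, det2, Prod.fst_add, Prod.snd_add]
    ring
  have h1 : |M' - M| ≤ (|u₁ - u₀| + |v₀ - v₁|) * max |δu| |δv| := by
    rw [hdiff]
    calc |δv * (u₁ - u₀) + δu * (v₀ - v₁)| ≤ |δv * (u₁ - u₀)| + |δu * (v₀ - v₁)| :=
          abs_add_le _ _
      _ = |δv| * |u₁ - u₀| + |δu| * |v₀ - v₁| := by rw [abs_mul, abs_mul]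
      _ ≤ max |δu| |δv| * |u₁ - u₀| + max |δu| |δv| * |v₀ - v₁| := by
          gcongr
          exacts [le_max_right _ _, le_max_left _ _]
      _ = (|u₁ - u₀| + |v₀ - v₁|) * max |δu| |δv| := by ring
  linarith
end
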